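/- Fix real c > 2 and integer ℓ ≠ 0. The second-order ODE (2−c)ρ + (4−c)Δ ρ' + (Δ² − ℓ²) ρ'' = 0 on the interval (|ℓ|, ∞) has the solution ρ(Δ) = (Δ² − ℓ²)^{c/2 − 1}, and this is, up to scalar multiple, the unique solution (in the two-dimensional solution space) that extends continuously to Δ = |ℓ| with value 0. -/

import Mathlib

/-!
The ODE is exact: its left-hand side is the derivative of the first integral
`F = (Δ² - ℓ²) ρ' + (2 - c) Δ ρ`, so `F` is a constant `K` on `(|ℓ|, ∞)`, and then
`(ρ / ρ₀)' = K (Δ² - ℓ²) ^ (-c/2)`. For `ρ₀` itself `F = 0`, which gives the first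
claim. If `K ≠ 0`, the singularity `(Δ - |ℓ|) ^ (-c/2)` is not integrable at `|ℓ|`
(as `c > 2`), and comparing `ρ / ρ₀` with `(Δ - |ℓ|) ^ (1 - c/2)` keeps `ρ` away
from `0` near `|ℓ|`. Hence `K = 0` and `ρ / ρ₀` is constant.
-/

open Set Filter Topology

lemma exists_eq_on_Ioi_of_hasDerivAt_zero {f : ℝ → ℝ} {a : ℝ}
    (hf : ∀ x ∈ Ioi a, HasDerivAt f 0 x) : ∃ k, ∀ x ∈ Ioi a, f x = k :=
  isOpen_Ioi.exists_is_const_of_deriv_eq_zero isPreconnected_Ioi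
    (fun x hx => (hf x hx).differentiableAt.differentiableWithinAt)
    (fun x hx => (hf x hx).deriv)

def firstIntegral (c m : ℝ) (ρ ρ' : ℝ → ℝ) (x : ℝ) : ℝ :=
  (x ^ 2 - m) * ρ' x + (2 - c) * x * ρ x

lemma hasDerivAt_firstIntegral {c m Δ r'' : ℝ} {ρ ρ' : ℝ → ℝ}
    (hρ : HasDerivAt ρ (ρ' Δ) Δ) (hρ' : HasDerivAt ρ' r'' Δ) :
    HasDerivAt (firstIntegral c m ρ ρ')
      ((2 - c) * ρ Δ + (4 - c) * Δ * ρ' Δ + (Δ ^ 2 - m) * r'') Δ := by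
  have hX : HasDerivAt (fun x : ℝ => x ^ 2 - m) (2 * Δ) Δ := by
    simpa using (hasDerivAt_pow 2 Δ).sub_const m
  refine ((hX.mul hρ').add (((hasDerivAt_id Δ).const_mul (2 - c)).mul hρ)).congr_deriv ?_
  simp only [id]
  ring

lemma hasDerivAt_sq_sub_rpow {m Δ : ℝ} (s : ℝ) (hΔ : 0 < Δ ^ 2 - m) :
    HasDerivAt (fun x => (x ^ 2 - m) ^ s) (s * (Δ ^ 2 - m) ^ (s - 1) * (2 * Δ)) Δ := by
  have hX : HasDerivAt (fun x : ℝ => x ^ 2 - m) (2 * Δ) Δ := by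
    simpa using (hasDerivAt_pow 2 Δ).sub_const m
  exact (Real.hasDerivAt_rpow_const (Or.inl hΔ.ne')).comp Δ hX

lemma hasDerivAt_mul_sq_sub_rpow {c m Δ : ℝ} {ρ ρ' : ℝ → ℝ} (hΔ : 0 < Δ ^ 2 - m)
    (hρ : HasDerivAt ρ (ρ' Δ) Δ) :
    HasDerivAt (fun x => ρ x * (x ^ 2 - m) ^ (1 - c / 2))
      ((Δ ^ 2 - m) ^ (-(c / 2)) * firstIntegral c m ρ ρ' Δ) Δ := by
  refine (hρ.mul (hasDerivAt_sq_sub_rpow (1 - c / 2) hΔ)).congr_deriv ?_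
  unfold firstIntegral
  have : (Δ ^ 2 - m) ^ (1 - c / 2) = (Δ ^ 2 - m) ^ (-(c / 2)) * (Δ ^ 2 - m) := by
    rw [← Real.rpow_add_one hΔ.ne']; ring_nf
  rw [this, show 1 - c / 2 - 1 = -(c / 2) by ring]
  ring

theorem ode_sq_sub_rpow (c m Δ : ℝ) (hΔ : 0 < Δ ^ 2 - m) :
    (2 - c) * (Δ ^ 2 - m) ^ (c / 2 - 1) +
        (4 - c) * Δ * deriv (fun x => (x ^ 2 - m) ^ (c / 2 - 1)) Δ +
      (Δ ^ 2 - m) * deriv (deriv fun x => (x ^ 2 - m) ^ (c / 2 - 1)) Δ = 0 := by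
  set U : Set ℝ := {x | 0 < x ^ 2 - m}
  have hU : IsOpen U := isOpen_lt continuous_const (by fun_prop)
  set ρ₁ : ℝ → ℝ := fun x => (c / 2 - 1) * (x ^ 2 - m) ^ (c / 2 - 1 - 1) * (2 * x)
  have hρ₀ : ∀ x ∈ U, HasDerivAt (fun x => (x ^ 2 - m) ^ (c / 2 - 1)) (ρ₁ x) x :=
    fun x hx => hasDerivAt_sq_sub_rpow _ hx
  have hρ₁ : DifferentiableAt ℝ ρ₁ Δ := by
    have : DifferentiableAt ℝ (fun x : ℝ => (x ^ 2 - m) ^ (c / 2 - 1 - 1)) Δ :=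
      (hasDerivAt_sq_sub_rpow _ hΔ).differentiableAt
    fun_prop
  have hderiv : deriv (fun x => (x ^ 2 - m) ^ (c / 2 - 1)) =ᶠ[𝓝 Δ] ρ₁ :=
    eventually_of_mem (hU.mem_nhds hΔ) fun x hx => (hρ₀ x hx).deriv
  have hfirst :
      firstIntegral c m (fun x => (x ^ 2 - m) ^ (c / 2 - 1)) ρ₁ =ᶠ[𝓝 Δ] fun _ => 0 := by
    refine eventually_of_mem (hU.mem_nhds hΔ) fun x hx => ?_
    have : (x ^ 2 - m) ^ (c / 2 - 1) = (x ^ 2 - m) ^ (c / 2 - 1 - 1) * (x ^ 2 - m) := by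
      rw [← Real.rpow_add_one (hx.ne')]; ring_nf
    simp only [firstIntegral, ρ₁, this]
    ring
  rw [hderiv.deriv_eq, (hρ₀ Δ hΔ).deriv]
  exact (hasDerivAt_firstIntegral (hρ₀ Δ hΔ) hρ₁.hasDerivAt).unique
    ((hasDerivAt_const Δ (0 : ℝ)).congr_of_eventuallyEq hfirst)

/-- The comparison function `h x + (κ / p) (x - a) ^ (-p)` is monotone, so `h x (x - a) ^ p`
stays below `-κ / p + o(1)` as `x → a⁺`. -/
lemma not_tendsto_mul_rpow_of_le_deriv {h h' : ℝ → ℝ} {a b p κ : ℝ} (hab : a < b) (hp : 0 < p)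
    (hκ : 0 < κ) (hh : ∀ x ∈ Ioo a b, HasDerivAt h (h' x) x)
    (hh' : ∀ x ∈ Ioo a b, κ * (x - a) ^ (-p - 1) ≤ h' x) :
    ¬ Tendsto (fun x => h x * (x - a) ^ p) (𝓝[>] a) (𝓝 0) := by
  intro hlim
  set φ : ℝ → ℝ := fun x => h x + κ / p * (x - a) ^ (-p)
  have hφ : ∀ x ∈ Ioo a b, HasDerivAt φ (h' x - κ * (x - a) ^ (-p - 1)) x := by
    intro x hx
    have hxa := ((hasDerivAt_id' x).sub_const a).rpow_const (p := -p)
      (Or.inl (sub_pos.2 hx.1).ne')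
    refine ((hh x hx).add (hxa.const_mul (κ / p))).congr_deriv ?_
    field_simp
    ring
  have hmono : MonotoneOn φ (Ioo a b) := by
    refine monotoneOn_of_hasDerivWithinAt_nonneg (convex_Ioo a b)
      (fun x hx => (hφ x hx).continuousAt.continuousWithinAt)
      (fun x hx => (hφ x (interior_subset hx)).hasDerivWithinAt) fun x hx => ?_
    exact sub_nonneg.2 (hh' x (interior_subset hx))
  obtain ⟨m, hm⟩ := nonempty_Ioo.2 hab
  have hpow : Tendsto (fun x => (x - a) ^ p) (𝓝[>] a) (𝓝 0) := by
    have : Continuous fun x : ℝ => (x - a) ^ p :=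
      (continuous_sub_right a).rpow_const fun _ => Or.inr hp.le
    simpa [Real.zero_rpow hp.ne'] using (this.tendsto a).mono_left nhdsWithin_le_nhds
  have hbound : ∀ᶠ x in 𝓝[>] a, h x * (x - a) ^ p + κ / p ≤ φ m * (x - a) ^ p := by
    filter_upwards [Ioo_mem_nhdsGT hm.1] with x hx
    have hxa : 0 < x - a := sub_pos.2 hx.1
    have hφx : φ x * (x - a) ^ p = h x * (x - a) ^ p + κ / p := by
      simp only [φ, Real.rpow_neg hxa.le]
      field_simp
    rw [← hφx]
    exact mul_le_mul_of_nonneg_right (hmono ⟨hx.1, hx.2.trans hm.2⟩ hm hx.2.le)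
      (Real.rpow_nonneg hxa.le p)
  have := le_of_tendsto_of_tendsto (hlim.add_const (κ / p)) (hpow.const_mul (φ m)) hbound
  simp only [zero_add, mul_zero] at this
  exact (div_pos hκ hp).not_ge this

lemma nonpos_of_tendsto_mul_sq_sub_rpow {h : ℝ → ℝ} {L p K : ℝ} (hL : 0 < L) (hp : 0 < p)
    (hh : ∀ x ∈ Ioi L, HasDerivAt h (K * (x ^ 2 - L ^ 2) ^ (-p - 1)) x)
    (hlim : Tendsto (fun x => h x * (x ^ 2 - L ^ 2) ^ p) (𝓝[>] L) (𝓝 0)) : K ≤ 0 := by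
  by_contra! hK
  refine not_tendsto_mul_rpow_of_le_deriv (lt_add_one L) hp
    (mul_pos hK (Real.rpow_pos_of_pos (by linarith : 0 < 2 * L + 1) (-p - 1)))
    (fun x hx => hh x hx.1) (fun x hx => ?_) ?_
  · have hxL : 0 < x - L := sub_pos.2 hx.1
    have hsplit : (x ^ 2 - L ^ 2) ^ (-p - 1) = (x - L) ^ (-p - 1) * (x + L) ^ (-p - 1) := by
      rw [← Real.mul_rpow hxL.le (by linarith [hx.1])]; ring_nf
    have : (2 * L + 1) ^ (-p - 1) ≤ (x + L) ^ (-p - 1) :=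
      Real.rpow_le_rpow_of_nonpos (by linarith [hx.1]) (by linarith [hx.2]) (by linarith)
    have hpos := Real.rpow_pos_of_pos hxL (-p - 1)
    calc K * (2 * L + 1) ^ (-p - 1) * (x - L) ^ (-p - 1)
        = K * (x - L) ^ (-p - 1) * (2 * L + 1) ^ (-p - 1) := by ring
      _ ≤ K * (x - L) ^ (-p - 1) * (x + L) ^ (-p - 1) := by gcongr
      _ = K * (x ^ 2 - L ^ 2) ^ (-p - 1) := by rw [hsplit]; ring
  · have hsum : ContinuousAt (fun x : ℝ => (x + L) ^ (-p)) L :=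
      (continuous_add_const L).continuousAt.rpow_const (Or.inl (by positivity))
    have := hlim.mul (hsum.tendsto.mono_left nhdsWithin_le_nhds)
    rw [zero_mul] at this
    refine this.congr' ?_
    filter_upwards [self_mem_nhdsWithin] with x hx
    have hxL : 0 < x - L := sub_pos.2 hx
    have hxL' : 0 < x + L := by linarith [mem_Ioi.1 hx]
    rw [show x ^ 2 - L ^ 2 = (x - L) * (x + L) by ring, Real.mul_rpow hxL.le hxL'.le,
      Real.rpow_neg hxL'.le]
    field_simp

lemma eq_zero_of_tendsto_mul_sq_sub_rpow {h : ℝ → ℝ} {L p K : ℝ} (hL : 0 < L) (hp : 0 < p)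
    (hh : ∀ x ∈ Ioi L, HasDerivAt h (K * (x ^ 2 - L ^ 2) ^ (-p - 1)) x)
    (hlim : Tendsto (fun x => h x * (x ^ 2 - L ^ 2) ^ p) (𝓝[>] L) (𝓝 0)) : K = 0 := by
  have hneg : -K ≤ 0 := by
    refine nonpos_of_tendsto_mul_sq_sub_rpow (h := -h) hL hp (fun x hx => ?_) ?_
    · simpa [neg_mul] using (hh x hx).neg
    · simpa [neg_mul] using hlim.neg
  linarith [nonpos_of_tendsto_mul_sq_sub_rpow hL hp hh hlim]

theorem eq_const_mul_of_ode_of_tendsto_zero {c L : ℝ} (hc : 2 < c) (hL : 0 < L)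
    {ρ ρ' ρ'' : ℝ → ℝ} (hρ : ∀ x ∈ Ioi L, HasDerivAt ρ (ρ' x) x)
    (hρ' : ∀ x ∈ Ioi L, HasDerivAt ρ' (ρ'' x) x)
    (hode : ∀ x ∈ Ioi L,
      (2 - c) * ρ x + (4 - c) * x * ρ' x + (x ^ 2 - L ^ 2) * ρ'' x = 0)
    (hlim : Tendsto ρ (𝓝[>] L) (𝓝 0)) :
    ∃ lam : ℝ, ∀ x ∈ Ioi L, ρ x = lam * (x ^ 2 - L ^ 2) ^ (c / 2 - 1) := by
  have hX : ∀ x ∈ Ioi L, 0 < x ^ 2 - L ^ 2 := fun x hx => by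
    nlinarith [mem_Ioi.1 hx]
  obtain ⟨K, hK⟩ : ∃ K, ∀ x ∈ Ioi L, firstIntegral c (L ^ 2) ρ ρ' x = K :=
    exists_eq_on_Ioi_of_hasDerivAt_zero fun x hx =>
      hode x hx ▸ hasDerivAt_firstIntegral (hρ x hx) (hρ' x hx)
  set h : ℝ → ℝ := fun x => ρ x * (x ^ 2 - L ^ 2) ^ (1 - c / 2)
  have hh : ∀ x ∈ Ioi L, HasDerivAt h (K * (x ^ 2 - L ^ 2) ^ (-(c / 2 - 1) - 1)) x := by
    intro x hx
    convert hasDerivAt_mul_sq_sub_rpow (hX x hx) (hρ x hx) using 1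
    rw [hK x hx]
    ring_nf
  have hρh : ∀ x ∈ Ioi L, ρ x = h x * (x ^ 2 - L ^ 2) ^ (c / 2 - 1) := fun x hx => by
    simp only [h, mul_assoc, ← Real.rpow_add (hX x hx)]
    norm_num
  have hK0 : K = 0 := by
    refine eq_zero_of_tendsto_mul_sq_sub_rpow hL (by linarith) hh (hlim.congr' ?_)
    filter_upwards [self_mem_nhdsWithin] with x hx using hρh x hx
  obtain ⟨lam, hlam⟩ := exists_eq_on_Ioi_of_hasDerivAt_zero fun x hx => by
    simpa [hK0] using hh x hx
  exact ⟨lam, fun x hx => by rw [hρh x hx, hlam x hx]⟩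

theorem stmt17 (c : ℝ) (hc : 2 < c) (ℓ : ℤ) (hℓ : ℓ ≠ 0) :
    let ρ₀ : ℝ → ℝ := fun Δ => (Δ ^ 2 - (ℓ : ℝ) ^ 2) ^ (c / 2 - 1)
    (∀ Δ ∈ Ioi |(ℓ : ℝ)|,
        (2 - c) * ρ₀ Δ + (4 - c) * Δ * deriv ρ₀ Δ +
          (Δ ^ 2 - (ℓ : ℝ) ^ 2) * deriv (deriv ρ₀) Δ = 0) ∧
      (∀ ρ ρ' ρ'' : ℝ → ℝ,
        (∀ Δ ∈ Ioi |(ℓ : ℝ)|, HasDerivAt ρ (ρ' Δ) Δ) →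
        (∀ Δ ∈ Ioi |(ℓ : ℝ)|, HasDerivAt ρ' (ρ'' Δ) Δ) →
        (∀ Δ ∈ Ioi |(ℓ : ℝ)|,
          (2 - c) * ρ Δ + (4 - c) * Δ * ρ' Δ + (Δ ^ 2 - (ℓ : ℝ) ^ 2) * ρ'' Δ = 0) →
        Filter.Tendsto ρ (nhdsWithin |(ℓ : ℝ)| (Ioi |(ℓ : ℝ)|)) (nhds 0) →
        ∃ lam : ℝ, ∀ Δ ∈ Ioi |(ℓ : ℝ)|, ρ Δ = lam * ρ₀ Δ) := by
  intro ρ₀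
  have hL : 0 < |(ℓ : ℝ)| := abs_pos.2 (Int.cast_ne_zero.2 hℓ)
  have hsq : |(ℓ : ℝ)| ^ 2 = (ℓ : ℝ) ^ 2 := sq_abs _
  refine ⟨fun Δ hΔ => ode_sq_sub_rpow c _ Δ ?_, fun ρ ρ' ρ'' hρ hρ' hode hlim => ?_⟩
  · rw [← hsq]
    nlinarith [mem_Ioi.1 hΔ]
  · rw [← hsq] at hode
    obtain ⟨lam, hlam⟩ := eq_const_mul_of_ode_of_tendsto_zero hc hL hρ hρ' hode hlim
    exact ⟨lam, fun Δ hΔ => by rw [hlam Δ hΔ, hsq]⟩
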